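/- arXiv:1603.02581 — 3 statements merged into one kernel-verified Lean document; each statement's English description precedes it below -/
import Mathlib

section
/- Let $E$ be an $m$-dimensional subspace of $L_r(\mu, X)$ for a probability measure $\mu$, a Banach space $X$, and $1 \le r < \infty$. Fix a normalized Auerbach basis $(e_i)_{i=1}^m$ of $E$ and define $\phi(t) = m^{-1}\sum_{i=1}^m \|e_i(t)\|_X^r$. Then $d\nu = \phi\, d\mu$ is a probability measure, the map $S : E \to L_r(\nu, X)$ given by $S(e) = \phi^{-1/r} e$ (with convention $0/0 = 0$) is a well-defined linear isometry, and for every $e \in E$ one has $\|Se\|_{L_\infty(\nu, X)} \le m \|e\|_{L_r(\mu, X)}$. -/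
open MeasureTheory
open scoped ENNReal

/-!
Write `g = ∑ αᵢ eᵢ` and `φ = m⁻¹ ∑ ‖eᵢ‖^r`. As `∫ ‖eᵢ‖^r dμ = 1`, `φ` has integral `1`, and
`φ ‖φ^{-1/r} g‖^r = ‖g‖^r` pointwise: where `φ = 0` every `eᵢ` vanishes, and `Real.rpow` gives
`0 ^ (-1/r) = 0`, which is the convention `0/0 = 0`. For the `L_∞` bound, the Auerbach property
applied to `g / (‖g‖_r + ε)` gives `|αᵢ| ≤ ‖g‖_r`, hence
`‖g t‖ ≤ ‖g‖_r ∑ ‖eᵢ t‖ ≤ ‖g‖_r · m φ(t)^{1/r}` by the power mean inequality.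
-/

section
variable {Ω : Type*} [MeasurableSpace Ω] {μ : Measure Ω} {X : Type*} [NormedAddCommGroup X]
  {r : ℝ}

theorem lintegral_enorm_rpow_eq_eLpNorm_ofReal_rpow {f : Ω → X} (hr : 0 < r) :
    ∫⁻ t, ‖f t‖ₑ ^ r ∂μ = eLpNorm f (ENNReal.ofReal r) μ ^ r := by
  rw [eLpNorm_eq_eLpNorm' (by simpa using hr) ENNReal.ofReal_ne_top,
    ENNReal.toReal_ofReal hr.le, lintegral_rpow_enorm_eq_rpow_eLpNorm' hr]

theorem eq_zero_of_mean_norm_rpow_eq_zero {m : ℕ} {v : Fin m → X} (hr : r ≠ 0)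
    (h : (m : ℝ)⁻¹ * ∑ i, ‖v i‖ ^ r = 0) (i : Fin m) : v i = 0 := by
  have hm : (m : ℝ)⁻¹ ≠ 0 := by simpa using i.pos.ne'
  have hsum := (mul_eq_zero.1 h).resolve_left hm
  have hi := (Finset.sum_eq_zero_iff_of_nonneg fun j _ => by positivity).1 hsum i
    (Finset.mem_univ i)
  simpa [Real.rpow_eq_zero (norm_nonneg _) hr] using hi

theorem sum_le_mul_mean_rpow_rpow_inv {m : ℕ} (x : Fin m → ℝ) (hx : ∀ i, 0 ≤ x i)
    (hr : 1 ≤ r) : ∑ i, x i ≤ m * ((m : ℝ)⁻¹ * ∑ i, x i ^ r) ^ r⁻¹ := by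
  rcases m.eq_zero_or_pos with rfl | hm
  · simp
  have hm' : (m : ℝ) ≠ 0 := by positivity
  have hw : ∑ _i : Fin m, (m : ℝ)⁻¹ = 1 := by simp [hm']
  have hmean := Real.rpow_arith_mean_le_arith_mean_rpow Finset.univ (fun _ => (m : ℝ)⁻¹) x
    (fun _ _ => by positivity) hw (fun i _ => hx i) hr
  rw [← Finset.mul_sum, ← Finset.mul_sum] at hmean
  have hmean' : (m : ℝ)⁻¹ * ∑ i, x i ≤ ((m : ℝ)⁻¹ * ∑ i, x i ^ r) ^ r⁻¹ :=
    (Real.le_rpow_inv_iff_of_pos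
      (mul_nonneg (by positivity) (Finset.sum_nonneg fun i _ => hx i))
      (mul_nonneg (by positivity) (Finset.sum_nonneg fun i _ => Real.rpow_nonneg (hx i) r))
      (by linarith)).2 hmean
  calc ∑ i, x i = m * ((m : ℝ)⁻¹ * ∑ i, x i) := by field_simp
    _ ≤ _ := by gcongr

theorem norm_mean_norm_rpow_neg_smul_sum_le [NormedSpace ℝ X] {m : ℕ} (hr : 1 ≤ r)
    (v : Fin m → X) (α : Fin m → ℝ) {B : ℝ} (hα : ∀ i, |α i| ≤ B) :
    ‖((m : ℝ)⁻¹ * ∑ i, ‖v i‖ ^ r) ^ (-1 / r) • ∑ i, α i • v i‖ ≤ m * B := by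
  rcases m.eq_zero_or_pos with rfl | hm
  · simp
  have hB : 0 ≤ B := (abs_nonneg _).trans (hα ⟨0, hm⟩)
  set x := ((m : ℝ)⁻¹ * ∑ i, ‖v i‖ ^ r) ^ r⁻¹
  have hx : 0 ≤ x := by positivity
  have hφ : ((m : ℝ)⁻¹ * ∑ i, ‖v i‖ ^ r) ^ (-1 / r) = x⁻¹ := by
    rw [neg_div, one_div, Real.rpow_neg (by positivity)]
  have hsum : ‖∑ i, α i • v i‖ ≤ B * (m * x) :=
    calc ‖∑ i, α i • v i‖ ≤ ∑ i, |α i| * ‖v i‖ := by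
          simpa [norm_smul] using norm_sum_le Finset.univ fun i => α i • v i
      _ ≤ ∑ i, B * ‖v i‖ := by gcongr with i; exact hα i
      _ ≤ B * (m * x) := by
          rw [← Finset.mul_sum]
          exact mul_le_mul_of_nonneg_left
            (sum_le_mul_mean_rpow_rpow_inv _ (fun i => norm_nonneg _) hr) hB
  calc ‖_‖ = x⁻¹ * ‖∑ i, α i • v i‖ := by
        rw [hφ, norm_smul, Real.norm_of_nonneg (inv_nonneg.2 hx)]
    _ ≤ x⁻¹ * (B * (m * x)) := by gcongr
    _ = m * B * (x⁻¹ * x) := by ring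
    _ ≤ m * B := mul_le_of_le_one_right (by positivity) inv_mul_le_one

theorem ofReal_abs_le_eLpNorm_of_auerbach [NormedSpace ℝ X] {ι : Type*} [Fintype ι]
    {p : ℝ≥0∞} {e : ι → Ω → X}
    (hauerbach : ∀ α : ι → ℝ, eLpNorm (fun t => ∑ i, α i • e i t) p μ ≤ 1 → ∀ i, |α i| ≤ 1)
    (α : ι → ℝ) (i : ι) : ENNReal.ofReal |α i| ≤ eLpNorm (fun t => ∑ j, α j • e j t) p μ := by
  set N := eLpNorm (fun t => ∑ j, α j • e j t) p μ
  refine ENNReal.le_of_forall_pos_le_add fun ε hε hN => ?_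
  set c : ℝ := N.toReal + ε
  have hc : 0 < c := by positivity
  have hNc : N + ε = ENNReal.ofReal c := by
    rw [ENNReal.ofReal_add ENNReal.toReal_nonneg ε.coe_nonneg, ENNReal.ofReal_toReal hN.ne,
      ENNReal.ofReal_coe_nnreal]
  have hscaled : eLpNorm (fun t => ∑ j, (c⁻¹ * α j) • e j t) p μ ≤ 1 := by
    have hfun : (fun t => ∑ j, (c⁻¹ * α j) • e j t) = c⁻¹ • fun t => ∑ j, α j • e j t := by
      ext t; simp [Finset.smul_sum, mul_smul]
    rw [hfun, eLpNorm_const_smul, Real.enorm_of_nonneg (by positivity)]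
    change ENNReal.ofReal c⁻¹ * N ≤ 1
    rw [← ENNReal.ofReal_toReal hN.ne, ← ENNReal.ofReal_mul (by positivity)]
    exact ENNReal.ofReal_le_one.2 <| (inv_mul_le_one₀ hc).2 (by simp [c])
  have hαc : |α i| ≤ c := by
    have := hauerbach _ hscaled i
    rwa [abs_mul, abs_inv, abs_of_pos hc, inv_mul_le_one₀ hc] at this
  rw [hNc]
  exact ENNReal.ofReal_le_ofReal hαc

theorem eLpNorm_withDensity_rpow_neg_smul [NormedSpace ℝ X] {φ : Ω → ℝ} (hφ : ∀ t, 0 ≤ φ t)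
    (hφm : AEMeasurable φ μ) {g : Ω → X} (hg : AEStronglyMeasurable g μ)
    (hsupp : ∀ t, φ t = 0 → g t = 0) (hr : 0 < r) :
    eLpNorm (fun t => φ t ^ (-1 / r) • g t) (ENNReal.ofReal r)
        (μ.withDensity fun t => ENNReal.ofReal (φ t)) = eLpNorm g (ENNReal.ofReal r) μ := by
  have hpointwise : ∀ t,
      ENNReal.ofReal (φ t) * ‖φ t ^ (-1 / r) • g t‖ₑ ^ r = ‖g t‖ₑ ^ r := by
    intro t
    rcases (hφ t).eq_or_lt with h0 | hpos
    · simp [hsupp t h0.symm, ← h0, ENNReal.zero_rpow_of_pos hr]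
    rw [enorm_smul, ENNReal.mul_rpow_of_nonneg _ _ hr.le, ← mul_assoc,
      Real.enorm_of_nonneg (by positivity), ENNReal.ofReal_rpow_of_nonneg (by positivity) hr.le,
      ← ENNReal.ofReal_mul (hφ t), ← Real.rpow_mul (hφ t), div_mul_cancel₀ _ hr.ne',
      Real.rpow_neg_one, mul_inv_cancel₀ hpos.ne', ENNReal.ofReal_one, one_mul]
  have hmeas : AEMeasurable (fun t => ‖φ t ^ (-1 / r) • g t‖ₑ ^ r) μ :=
    ((hφm.pow_const _).aestronglyMeasurable.smul hg).enorm.pow_const r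
  refine ENNReal.rpow_left_injective hr.ne' ?_
  simp only [← lintegral_enorm_rpow_eq_eLpNorm_ofReal_rpow hr]
  rw [lintegral_withDensity_eq_lintegral_mul₀ hφm.ennreal_ofReal hmeas]
  exact lintegral_congr hpointwise

theorem isProbabilityMeasure_withDensity_mean_norm_rpow {m : ℕ} (hm : 0 < m)
    {e : Fin m → Ω → X} (hmeas : ∀ i, AEStronglyMeasurable (e i) μ) (hr : 0 < r)
    (hnorm : ∀ i, eLpNorm (e i) (ENNReal.ofReal r) μ = 1) :
    IsProbabilityMeasure
      (μ.withDensity fun t => ENNReal.ofReal ((m : ℝ)⁻¹ * ∑ i, ‖e i t‖ ^ r)) := by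
  have hdensity : ∀ t, ENNReal.ofReal ((m : ℝ)⁻¹ * ∑ i, ‖e i t‖ ^ r)
      = (m : ℝ≥0∞)⁻¹ * ∑ i, ‖e i t‖ₑ ^ r := fun t => by
    rw [ENNReal.ofReal_mul (by positivity), ENNReal.ofReal_inv_of_pos (by positivity),
      ENNReal.ofReal_natCast, ENNReal.ofReal_sum_of_nonneg fun i _ => by positivity]
    simp only [← ofReal_norm, ENNReal.ofReal_rpow_of_nonneg (norm_nonneg _) hr.le]
  constructor
  rw [withDensity_apply _ MeasurableSet.univ, Measure.restrict_univ]
  simp only [hdensity]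
  rw [lintegral_const_mul' _ _ (by simp [hm.ne']), lintegral_finsetSum' _ fun i _ => by fun_prop]
  simp [lintegral_enorm_rpow_eq_eLpNorm_ofReal_rpow hr, hnorm,
    ENNReal.inv_mul_cancel (Nat.cast_ne_zero.2 hm.ne')]

end

theorem change_of_density_general {Ω : Type*} [MeasurableSpace Ω] (μ : Measure Ω)
    {X : Type*} [NormedAddCommGroup X] [NormedSpace ℝ X]
    (r : ℝ) (hr : 1 ≤ r) (m : ℕ) (hm : 0 < m)
    (e : Fin m → Ω → X) (hmeas : ∀ i, MemLp (e i) (ENNReal.ofReal r) μ)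
    (hnorm : ∀ i, eLpNorm (e i) (ENNReal.ofReal r) μ = 1)
    (hauerbach : ∀ α : Fin m → ℝ,
      eLpNorm (fun t => ∑ i, α i • e i t) (ENNReal.ofReal r) μ ≤ 1 →
        ∀ i, |α i| ≤ 1)
    (φ : Ω → ℝ) (hφ : ∀ t, φ t = (m : ℝ)⁻¹ * ∑ i, ‖e i t‖ ^ r)
    (ν : Measure Ω) (hν : ν = μ.withDensity fun t => ENNReal.ofReal (φ t)) :
    IsProbabilityMeasure ν ∧
    (∀ α : Fin m → ℝ,
      eLpNorm (fun t => φ t ^ (-(1 : ℝ) / r) • ∑ i, α i • e i t)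
          (ENNReal.ofReal r) ν
        = eLpNorm (fun t => ∑ i, α i • e i t) (ENNReal.ofReal r) μ) ∧
    (∀ α : Fin m → ℝ,
      eLpNorm (fun t => φ t ^ (-(1 : ℝ) / r) • ∑ i, α i • e i t) ⊤ ν
        ≤ (m : ℝ≥0∞) *
            eLpNorm (fun t => ∑ i, α i • e i t) (ENNReal.ofReal r) μ) := by
  obtain rfl : φ = fun t => (m : ℝ)⁻¹ * ∑ i, ‖e i t‖ ^ r := funext hφ
  subst hν
  have hr0 : 0 < r := by linarith
  have hmemLp (α : Fin m → ℝ) : MemLp (fun t => ∑ i, α i • e i t) (ENNReal.ofReal r) μ := by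
    simpa [Finset.sum_fn] using
      memLp_finsetSum' Finset.univ fun i _ => (hmeas i).const_smul (α i)
  refine ⟨isProbabilityMeasure_withDensity_mean_norm_rpow hm (fun i => (hmeas i).1) hr0 hnorm,
    fun α => ?_, fun α => ?_⟩
  · refine eLpNorm_withDensity_rpow_neg_smul (fun t => ?_) ?_ (hmemLp α).1 (fun t ht => ?_) hr0
    · positivity
    · exact aemeasurable_const.mul <|
        Finset.aemeasurable_fun_sum _ fun i _ => (hmeas i).1.norm.aemeasurable.pow_const r
    · simp [eq_zero_of_mean_norm_rpow_eq_zero hr0.ne' ht]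
  · have hfin := (hmemLp α).2.ne
    have hα (i : Fin m) := (ENNReal.ofReal_le_iff_le_toReal hfin).1
      (ofReal_abs_le_eLpNorm_of_auerbach hauerbach α i)
    rw [eLpNorm_exponent_top]
    refine (eLpNormEssSup_le_of_ae_bound <| ae_of_all _ fun t =>
      norm_mean_norm_rpow_neg_smul_sum_le hr (e · t) α hα).trans_eq ?_
    rw [ENNReal.ofReal_mul (by positivity), ENNReal.ofReal_natCast, ENNReal.ofReal_toReal hfin]

/-- Change of density for a finite-dimensional subspace of `L_r(μ, X)`:
given a normalized Auerbach basis `(e_i)_{i=1}^m` of the subspace, set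
`φ(t) = m⁻¹ ∑ ‖e_i(t)‖^r` and `dν = φ dμ`.  Then `ν` is a probability measure,
`S(e) = φ^{-1/r} e` is an isometry from the subspace into `L_r(ν, X)`, and
`‖Se‖_{L_∞(ν,X)} ≤ m ‖e‖_{L_r(μ,X)}`. -/
theorem change_of_density {Ω : Type*} [MeasurableSpace Ω] (μ : Measure Ω)
    [IsProbabilityMeasure μ] {X : Type*} [NormedAddCommGroup X] [NormedSpace ℝ X]
    [CompleteSpace X] (r : ℝ) (hr : 1 ≤ r) (m : ℕ) (hm : 0 < m)
    (e : Fin m → Ω → X) (hmeas : ∀ i, MemLp (e i) (ENNReal.ofReal r) μ)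
    (hnorm : ∀ i, eLpNorm (e i) (ENNReal.ofReal r) μ = 1)
    (hauerbach : ∀ α : Fin m → ℝ,
      eLpNorm (fun t => ∑ i, α i • e i t) (ENNReal.ofReal r) μ ≤ 1 →
        ∀ i, |α i| ≤ 1)
    (φ : Ω → ℝ) (hφ : ∀ t, φ t = (m : ℝ)⁻¹ * ∑ i, ‖e i t‖ ^ r)
    (ν : Measure Ω) (hν : ν = μ.withDensity fun t => ENNReal.ofReal (φ t)) :
    IsProbabilityMeasure ν ∧
    (∀ α : Fin m → ℝ,
      eLpNorm (fun t => φ t ^ (-(1 : ℝ) / r) • ∑ i, α i • e i t)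
          (ENNReal.ofReal r) ν
        = eLpNorm (fun t => ∑ i, α i • e i t) (ENNReal.ofReal r) μ) ∧
    (∀ α : Fin m → ℝ,
      eLpNorm (fun t => φ t ^ (-(1 : ℝ) / r) • ∑ i, α i • e i t) ⊤ ν
        ≤ (m : ℝ≥0∞) *
            eLpNorm (fun t => ∑ i, α i • e i t) (ENNReal.ofReal r) μ) :=
  change_of_density_general μ r hr m hm e hmeas hnorm hauerbach φ hφ ν hν
end

section
/- Let $M = (M_{x,y}^{a,b})$ be a Bell functional with $N$ inputs and $K$ outputs per party, and let $L = \max_{x,y,a,b}|M_{x,y}^{a,b}|$. Define $G_{x,y}^{a,b} = \frac{1}{2N^2} + \frac{1}{2N^2 L} M_{x,y}^{a,b}$. Then all coefficients of $G$ lie in $[0,1]$, and $\frac{\beta^*(G)}{\beta(G)} = \frac{\omega^*(M)}{\omega(M)}$, where $\beta(G) = \sup\{|\langle G, P\rangle - \frac12| : P \in \mathcal{P}_c\}$, $\beta^*(G) = \sup\{|\langle G, P\rangle - \frac12| : P \in \mathcal{P}_q\}$, $\omega(M) = \sup\{|\langle M, P\rangle| : P \in \mathcal{P}_c\}$ and $\omega^*(M)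 = \sup\{|\langle M, P\rangle| : P \in \mathcal{P}_q\}$. -/
open Matrix
open scoped Kronecker ComplexOrder Pointwise

namespace BellGame

/-- A strategy assigns to each pair of questions `(x,y)` and answers `(a,b)` a
real number `P(a,b|x,y)`. -/
abbrev Strategy (N K : ℕ) := Fin N → Fin N → Fin K → Fin K → ℝ

/-- Deterministic (local) strategies. -/
def detStrategies (N K : ℕ) : Set (Strategy N K) :=
  {P | ∃ fA fB : Fin N → Fin K,
    ∀ x y a b, P x y a b = if fA x = a ∧ fB y = b then 1 else 0}

/-- Classical strategies: convex combinations of deterministic strategies. -/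
def classicalStrategies (N K : ℕ) : Set (Strategy N K) :=
  convexHull ℝ (detStrategies N K)

/-- Quantum strategies: `P(a,b|x,y) = tr((E_x^a ⊗ F_y^b) ρ)` for POVMs
`{E_x^a}_a`, `{F_y^b}_b` and a density operator `ρ`. -/
def quantumStrategies (N K : ℕ) : Set (Strategy N K) :=
  {P | ∃ (d : ℕ) (E F : Fin N → Fin K → Matrix (Fin d) (Fin d) ℂ)
      (ρ : Matrix (Fin d × Fin d) (Fin d × Fin d) ℂ),
    (∀ x a, (E x a).PosSemidef) ∧ (∀ x, ∑ a, E x a = 1) ∧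
    (∀ y b, (F y b).PosSemidef) ∧ (∀ y, ∑ b, F y b = 1) ∧
    ρ.PosSemidef ∧ ρ.trace = 1 ∧
    ∀ x y a b, (P x y a b : ℂ) = (((E x a) ⊗ₖ (F y b)) * ρ).trace}

/-- The dual action `⟨M, P⟩ = ∑ M_{x,y}^{a,b} P(a,b|x,y)`. -/
def pair {N K : ℕ} (M P : Strategy N K) : ℝ :=
  ∑ x, ∑ y, ∑ a, ∑ b, M x y a b * P x y a b

/-- Classical value of a Bell functional. -/
noncomputable def omegaC {N K : ℕ} (M : Strategy N K) : ℝ :=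
  sSup {t | ∃ P ∈ classicalStrategies N K, t = |pair M P|}

/-- Quantum value of a Bell functional. -/
noncomputable def omegaQ {N K : ℕ} (M : Strategy N K) : ℝ :=
  sSup {t | ∃ P ∈ quantumStrategies N K, t = |pair M P|}

/-- Classical bias of a game. -/
noncomputable def betaC {N K : ℕ} (G : Strategy N K) : ℝ :=
  sSup {t | ∃ P ∈ classicalStrategies N K, t = |pair G P - 1 / 2|}

/-- Quantum bias of a game. -/
noncomputable def betaQ {N K : ℕ} (G : Strategy N K) : ℝ :=
  sSup {t | ∃ P ∈ quantumStrategies N K, t = |pair G P - 1 / 2|}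


/-- The set of strategies whose outputs sum to `1` for each question pair. -/
def normalized (N K : ℕ) : Set (Strategy N K) :=
  {P | ∀ x y, ∑ a, ∑ b, P x y a b = 1}

lemma convex_normalized (N K : ℕ) : Convex ℝ (normalized N K) := by
  intro P hP Q hQ s t hs ht hst x y
  simp only [Pi.add_apply, Pi.smul_apply, smul_eq_mul]
  simp [Finset.sum_add_distrib, ← Finset.mul_sum, hP x y, hQ x y, hst]

lemma classical_mem_normalized {N K : ℕ} {P : Strategy N K}
    (h : P ∈ classicalStrategies N K) : P ∈ normalized N K := by
  refine convexHull_min ?_ (convex_normalized N K) h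
  rintro P ⟨fA, fB, hP⟩ x y
  simp [hP, ite_and, Finset.sum_ite_eq]

lemma sum_kron {d K : ℕ} (A : Fin K → Matrix (Fin d) (Fin d) ℂ)
    (B : Matrix (Fin d) (Fin d) ℂ) :
    (∑ a, A a) ⊗ₖ B = ∑ a, (A a) ⊗ₖ B := by
  ext ⟨i, j⟩ ⟨k, l⟩
  simp [Matrix.kroneckerMap_apply, Matrix.sum_apply, Finset.sum_mul]

lemma kron_sum {d K : ℕ} (A : Matrix (Fin d) (Fin d) ℂ)
    (B : Fin K → Matrix (Fin d) (Fin d) ℂ) :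
    A ⊗ₖ (∑ b, B b) = ∑ b, A ⊗ₖ (B b) := by
  ext ⟨i, j⟩ ⟨k, l⟩
  simp [Matrix.kroneckerMap_apply, Matrix.sum_apply, Finset.mul_sum]

lemma quantum_mem_normalized {N K : ℕ} {P : Strategy N K}
    (h : P ∈ quantumStrategies N K) : P ∈ normalized N K := by
  obtain ⟨d, E, F, ρ, _, hE1, _, hF1, _, hρtr, hP⟩ := h
  intro x y
  have : ((∑ a, ∑ b, P x y a b : ℝ) : ℂ) = 1 := by
    push_cast
    simp_rw [hP, ← Matrix.trace_sum, ← Finset.sum_mul]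
    have hone : (∑ a, ∑ b, (E x a) ⊗ₖ (F y b)) = 1 := by
      rw [show (∑ a, ∑ b, (E x a) ⊗ₖ (F y b)) = (∑ a, E x a) ⊗ₖ (∑ b, F y b) by
        rw [sum_kron]; exact Finset.sum_congr rfl fun a _ => (kron_sum _ _).symm]
      rw [hE1 x, hF1 y, Matrix.one_kronecker_one]
    rw [hone, one_mul, hρtr]
  exact_mod_cast this

lemma pair_game_eq {N K : ℕ} (hN : 0 < N) (M G : Strategy N K) (c : ℝ)
    (hG : ∀ x y a b, G x y a b = 1 / (2 * (N : ℝ) ^ 2) + c * M x y a b)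
    {P : Strategy N K} (hP : P ∈ normalized N K) :
    pair G P = 1 / 2 + c * pair M P := by
  have hN' : ((N : ℝ) ^ 2) ≠ 0 := by positivity
  have hsum : ∑ x, ∑ y, ∑ a, ∑ b, P x y a b = (N : ℝ) ^ 2 := by
    rw [Finset.sum_congr rfl fun x _ => Finset.sum_congr rfl fun y _ => hP x y]
    simp [sq]
  unfold pair
  simp_rw [hG, add_mul, Finset.sum_add_distrib, mul_assoc, ← Finset.mul_sum]
  rw [hsum]
  field_simp

lemma bias_set_eq {N K : ℕ} (hN : 0 < N) (M G : Strategy N K) (c : ℝ)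
    (hc : 0 ≤ c)
    (hG : ∀ x y a b, G x y a b = 1 / (2 * (N : ℝ) ^ 2) + c * M x y a b)
    (S : Set (Strategy N K)) (hS : S ⊆ normalized N K) :
    {t | ∃ P ∈ S, t = |pair G P - 1 / 2|} =
      c • {t | ∃ P ∈ S, t = |pair M P|} := by
  ext t
  constructor
  · rintro ⟨P, hP, rfl⟩
    exact ⟨|pair M P|, ⟨P, hP, rfl⟩, by
      rw [pair_game_eq hN M G c hG (hS hP)]
      simp [abs_mul, abs_of_nonneg hc]⟩
  · rintro ⟨s, ⟨P, hP, rfl⟩, rfl⟩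
    refine ⟨P, hP, ?_⟩
    rw [pair_game_eq hN M G c hG (hS hP)]
    simp [abs_mul, abs_of_nonneg hc]

lemma sSup_zero_of_subset_zero {s : Set ℝ} (h : s ⊆ {0}) : sSup s = 0 := by
  rcases Set.subset_singleton_iff_eq.mp h with rfl | rfl
  · exact Real.sSup_empty
  · exact csSup_singleton 0

/-- From a Bell functional `M` with `L = max |M_{x,y}^{a,b}|`, the game
`G = 1/(2N²) + M/(2N²L)` has coefficients in `[0,1]` and satisfies
`β*(G)/β(G) = ω*(M)/ω(M)`. -/
theorem bias_ratio_eq_value_ratio (N K : ℕ) (hN : 0 < N) (hK : 0 < K)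
    (M : Strategy N K) (L : ℝ)
    (hL : ∀ x y a b, |M x y a b| ≤ L)
    (hL' : ∃ x y a b, |M x y a b| = L)
    (G : Strategy N K)
    (hG : ∀ x y a b, G x y a b =
      1 / (2 * (N : ℝ) ^ 2) + (1 / (2 * (N : ℝ) ^ 2 * L)) * M x y a b) :
    (∀ x y a b, 0 ≤ G x y a b ∧ G x y a b ≤ 1) ∧
    betaQ G / betaC G = omegaQ M / omegaC M := by
  have hL0 : 0 ≤ L := by
    obtain ⟨x, y, a, b, h⟩ := hL'
    rw [← h]; exact abs_nonneg _
  set c : ℝ := 1 / (2 * (N : ℝ) ^ 2 * L) with hc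
  have hcnn : 0 ≤ c := by
    rw [hc]
    rcases hL0.eq_or_lt with h0 | hpos
    · simp [← h0]
    · positivity
  have hN1 : (1 : ℝ) ≤ (N : ℝ) := by exact_mod_cast hN
  have hNpos : (0 : ℝ) < 2 * (N : ℝ) ^ 2 := by positivity
  have key : ∀ x y a b, |c * M x y a b| ≤ 1 / (2 * (N : ℝ) ^ 2) := by
    intro x y a b
    rcases hL0.eq_or_lt with h0 | hpos
    · have : c = 0 := by simp [hc, ← h0]
      rw [this]
      simp
    · rw [abs_mul, abs_of_pos (show 0 < c by rw [hc]; positivity)]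
      calc c * |M x y a b| ≤ c * L := by
              apply mul_le_mul_of_nonneg_left (hL x y a b) hcnn
        _ = 1 / (2 * (N : ℝ) ^ 2) := by rw [hc]; field_simp
  constructor
  · intro x y a b
    have h1 := abs_le.mp (key x y a b)
    have h2 : 1 / (2 * (N : ℝ) ^ 2) ≤ 1 / 2 := by
      apply div_le_div_of_nonneg_left (by norm_num) (by norm_num)
      nlinarith
    constructor
    · rw [hG]; linarith [h1.1]
    · rw [hG]; linarith [h1.2]
  · have hQ : betaQ G = c * omegaQ M := by
      unfold betaQ omegaQ
      rw [bias_set_eq hN M G c hcnn hG _ (fun P hP => quantum_mem_normalized hP),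
        Real.sSup_smul_of_nonneg hcnn, smul_eq_mul]
    have hC : betaC G = c * omegaC M := by
      unfold betaC omegaC
      rw [bias_set_eq hN M G c hcnn hG _ (fun P hP => classical_mem_normalized hP),
        Real.sSup_smul_of_nonneg hcnn, smul_eq_mul]
    rcases hL0.eq_or_lt with h0 | hpos
    · have hMz : ∀ x y a b, M x y a b = 0 := by
        intro x y a b
        have hle : |M x y a b| ≤ 0 := by rw [h0]; exact hL x y a b
        exact abs_eq_zero.mp (le_antisymm hle (abs_nonneg _))
      have hwC : omegaC M = 0 := by
        apply sSup_zero_of_subset_zero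
        rintro t ⟨P, hP, rfl⟩
        have : pair M P = 0 := by
          unfold pair
          exact Finset.sum_eq_zero fun x _ => Finset.sum_eq_zero fun y _ =>
            Finset.sum_eq_zero fun a _ => Finset.sum_eq_zero fun b _ => by
              rw [hMz]; ring
        simp [this]
      have hc0 : c = 0 := by simp [hc, ← h0]
      rw [hQ, hC, hwC, hc0]
      simp
    · have hcpos : 0 < c := by rw [hc]; positivity
      rw [hQ, hC, mul_div_mul_left _ _ (ne_of_gt hcpos)]

end BellGame
end

section
/- Suppose $0 < r < p < \infty$, $(\Omega,\mu)$ is a measure space, $X$ is a Banach space, and $(x_i)_{i \in I}$ is a family in $L_r(\mu, X)$. If there is a constant $C_1$ and a density $f \in D(\mu)$ such that for every measurable set $E$ and every $i$, $\|1_E x_i\|_{L_r(\mu,X)} \le C_1 (\int_E f\,d\mu)^{1/r - 1/p}$, then there is a universal constant $c$ such that for every finite sequence of scalars $(\alpha_i)$, $\big\|\sup_i \{|\alpha_i|\, \|x_i(\cdot)\|_X\}\big\|_{L_r(\mu)} \le c\, C_1 \big(\sum_i |\alpha_i|^p\big)^{1/p}$. -/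
/-!
Let `ρ = f μ`, a probability measure. For a finite index set `s`, split `Ω` into measurable
pieces `A i` on which the index `i` attains the supremum `g = sup_i |α_i| ‖x_i‖`. On `A i` the
hypothesis gives `∫_{A i} g^r ≤ |α_i|^r C₁^r ρ(A i)^(1 - r/p)`. Summing over `i`, Hölder's
inequality with exponents `p/r` and `p/(p-r)` together with `∑ ρ(A i) = 1` yields
`∫ g^r ≤ C₁^r (∑ |α_i|^p)^(r/p)`, so `c = 1` works.
-/

open MeasureTheory
open scoped ENNReal

theorem Finset.exists_measurable_partition_sup'_eq {Ω I β : Type*} [MeasurableSpace Ω]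
    [LinearOrder β] [MeasurableSpace β] [MeasurableSup₂ β] [MeasurableEq β]
    (s : Finset I) (hs : s.Nonempty) {u : I → Ω → β} (hu : ∀ i, Measurable (u i)) :
    ∃ A : I → Set Ω, (∀ i, MeasurableSet (A i)) ∧ (s : Set I).PairwiseDisjoint A ∧
      ⋃ i ∈ s, A i = Set.univ ∧
      ∀ i ∈ s, ∀ ω ∈ A i, s.sup' hs (u · ω) = u i ω := by
  classical
  -- an arbitrary linear order on `I` breaks ties between indices attaining the supremum
  let _ : LinearOrder I := linearOrderOfSTO WellOrderingRel
  set g : Ω → β := fun ω => s.sup' hs (u · ω)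
  have hg : Measurable g := by
    convert Finset.measurable_sup' hs fun i _ => hu i
    exact funext fun ω => (Finset.sup'_apply hs u ω).symm
  let T : I → Set Ω := fun i => {ω | g ω = u i ω}
  have hT : ∀ i, MeasurableSet (T i) := fun i => measurableSet_eq_fun hg (hu i)
  refine ⟨fun i => T i ∩ ⋂ j ∈ s.filter (· < i), (T j)ᶜ, fun i => ?_, ?_, ?_, ?_⟩
  · exact (hT i).inter (.biInter (Set.to_countable _) fun j _ => (hT j).compl)
  · intro i hi j hj hij
    refine Set.disjoint_left.2 fun ω hωi hωj => ?_
    simp only [Set.mem_inter_iff, Set.mem_iInter, Finset.mem_filter] at hωi hωj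
    rcases lt_or_gt_of_ne hij with h | h
    · exact hωj.2 i ⟨hi, h⟩ hωi.1
    · exact hωi.2 j ⟨hj, h⟩ hωj.1
  · refine Set.eq_univ_of_forall fun ω => ?_
    have hne : (s.filter (ω ∈ T ·)).Nonempty := by
      obtain ⟨i, hi, h⟩ := Finset.exists_mem_eq_sup' hs (u · ω)
      exact ⟨i, Finset.mem_filter.2 ⟨hi, h⟩⟩
    set i := (s.filter (ω ∈ T ·)).min' hne
    have hi := Finset.mem_filter.1 ((s.filter (ω ∈ T ·)).min'_mem hne)
    simp only [Set.mem_iUnion, Set.mem_inter_iff, Set.mem_iInter, Finset.mem_filter,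
      Set.mem_compl_iff]
    exact ⟨i, hi.1, hi.2, fun j hj hωj =>
      (Finset.min'_le _ j (Finset.mem_filter.2 ⟨hj.1, hωj⟩)).not_gt hj.2⟩
  · exact fun i _ ω hω => hω.1

theorem ENNReal.sum_mul_rpow_le {ι : Type*} (s : Finset ι) (b ν : ι → ℝ≥0∞) {q : ℝ}
    (hq : 1 < q) :
    ∑ i ∈ s, b i * ν i ^ (1 - 1 / q) ≤
      (∑ i ∈ s, b i ^ q) ^ (1 / q) * (∑ i ∈ s, ν i) ^ (1 - 1 / q) := by
  have hexp : (1 - 1 / q) * q.conjExponent = 1 := by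
    rw [Real.conjExponent]; field_simp [(sub_pos.2 hq).ne']
  have hinv : 1 / q.conjExponent = 1 - 1 / q := by
    rw [Real.conjExponent]; field_simp [(sub_pos.2 hq).ne']
  have := ENNReal.inner_le_Lp_mul_Lq s b (fun i => ν i ^ (1 - 1 / q)) (.conjExponent hq)
  simpa only [← ENNReal.rpow_mul, hexp, ENNReal.rpow_one, hinv] using this

theorem Finset.enorm_sup'_of_nonneg {ι : Type*} {s : Finset ι} (hs : s.Nonempty) {f : ι → ℝ}
    (hf : ∀ i ∈ s, 0 ≤ f i) : ‖s.sup' hs f‖ₑ = s.sup' hs fun i => ‖f i‖ₑ := by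
  have h0 : 0 ≤ s.sup' hs f := let ⟨i, hi⟩ := hs; (hf i hi).trans (s.le_sup' f hi)
  rw [Real.enorm_of_nonneg h0, apply_sup'_eq_sup'_comp _ _ ENNReal.ofReal_max]
  exact Finset.sup'_congr _ rfl fun j hj => (Real.enorm_of_nonneg (hf j hj)).symm

theorem ENNReal.ofReal_sum_abs_rpow {ι : Type*} (s : Finset ι) (a : ι → ℝ) {p : ℝ}
    (hp : 0 ≤ p) : ENNReal.ofReal (∑ i ∈ s, |a i| ^ p) = ∑ i ∈ s, ‖a i‖ₑ ^ p := by
  rw [ENNReal.ofReal_sum_of_nonneg fun i _ => by positivity]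
  refine Finset.sum_congr rfl fun i _ => ?_
  rw [Real.enorm_eq_ofReal_abs, ENNReal.ofReal_rpow_of_nonneg (abs_nonneg _) hp]

theorem withDensity_ofReal_apply {Ω : Type*} [MeasurableSpace Ω] {μ : Measure Ω}
    {f : Ω → ℝ} (hf : Integrable f μ) (hf0 : 0 ≤ᵐ[μ] f) {E : Set Ω}
    (hE : MeasurableSet E) :
    μ.withDensity (fun ω => ENNReal.ofReal (f ω)) E =
      ENNReal.ofReal (∫ t in E, f t ∂μ) := by
  rw [withDensity_apply _ hE,
    ofReal_integral_eq_lintegral_ofReal hf.integrableOn (ae_restrict_of_ae hf0)]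

section SupBound

variable {Ω I : Type*} [MeasurableSpace Ω] {μ ρ : Measure Ω} [IsProbabilityMeasure ρ]
  {r p : ℝ} {C : ℝ≥0∞}

theorem lintegral_sup'_mul_rpow_le_of_measurable (hr : 0 < r) (hrp : r < p)
    {u : I → Ω → ℝ≥0∞} (hu : ∀ i, Measurable (u i))
    (hdom : ∀ E, MeasurableSet E → ∀ i,
      ∫⁻ ω in E, u i ω ^ r ∂μ ≤ C * ρ E ^ (1 - r / p))
    (s : Finset I) (hs : s.Nonempty) (a : I → ℝ≥0∞) :
    ∫⁻ ω, (s.sup' hs fun i => a i * u i ω) ^ r ∂μ ≤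
      C * (∑ i ∈ s, a i ^ p) ^ (r / p) := by
  obtain ⟨A, hAm, hAd, hAU, hAsup⟩ :=
    s.exists_measurable_partition_sup'_eq hs fun i => (hu i).const_mul (a i)
  have hρA : ∑ i ∈ s, ρ (A i) = 1 := by
    rw [← measure_biUnion_finset hAd fun i _ => hAm i, hAU, measure_univ]
  calc ∫⁻ ω, (s.sup' hs fun i => a i * u i ω) ^ r ∂μ
      = ∑ i ∈ s, ∫⁻ ω in A i, (s.sup' hs fun j => a j * u j ω) ^ r ∂μ := by
        rw [← lintegral_biUnion_finset hAd fun i _ => hAm i, hAU, Measure.restrict_univ]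
    _ = ∑ i ∈ s, a i ^ r * ∫⁻ ω in A i, u i ω ^ r ∂μ := by
        refine Finset.sum_congr rfl fun i hi => ?_
        rw [← lintegral_const_mul _ ((hu i).pow_const r)]
        refine setLIntegral_congr_fun (hAm i) fun ω hω => ?_
        rw [hAsup i hi ω hω, ENNReal.mul_rpow_of_nonneg _ _ hr.le]
    _ ≤ ∑ i ∈ s, a i ^ r * (C * ρ (A i) ^ (1 - 1 / (p / r))) := by
        rw [one_div_div]
        gcongr with i
        exact hdom _ (hAm i) i
    _ ≤ C * ((∑ i ∈ s, (a i ^ r) ^ (p / r)) ^ (1 / (p / r)) *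
          (∑ i ∈ s, ρ (A i)) ^ (1 - 1 / (p / r))) := by
        simp_rw [mul_left_comm _ C, ← Finset.mul_sum]
        gcongr
        exact ENNReal.sum_mul_rpow_le s _ _ ((one_lt_div hr).2 hrp)
    _ = C * (∑ i ∈ s, a i ^ p) ^ (r / p) := by
        simp_rw [hρA, ENNReal.one_rpow, mul_one, one_div_div, ← ENNReal.rpow_mul,
          mul_div_cancel₀ p hr.ne']

theorem lintegral_sup'_mul_rpow_le (hr : 0 < r) (hrp : r < p)
    {u : I → Ω → ℝ≥0∞} (hu : ∀ i, AEMeasurable (u i) μ)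
    (hdom : ∀ E, MeasurableSet E → ∀ i,
      ∫⁻ ω in E, u i ω ^ r ∂μ ≤ C * ρ E ^ (1 - r / p))
    (s : Finset I) (hs : s.Nonempty) (a : I → ℝ≥0∞) :
    ∫⁻ ω, (s.sup' hs fun i => a i * u i ω) ^ r ∂μ ≤
      C * (∑ i ∈ s, a i ^ p) ^ (r / p) := by
  have hdom_mk : ∀ E, MeasurableSet E → ∀ i,
      ∫⁻ ω in E, (hu i).mk _ ω ^ r ∂μ ≤ C * ρ E ^ (1 - r / p) := fun E hE i => by
    refine le_of_eq_of_le (lintegral_congr_ae ?_) (hdom E hE i)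
    filter_upwards [ae_restrict_of_ae (hu i).ae_eq_mk] with ω hω
    rw [hω]
  calc ∫⁻ ω, (s.sup' hs fun i => a i * u i ω) ^ r ∂μ
      = ∫⁻ ω, (s.sup' hs fun i => a i * (hu i).mk _ ω) ^ r ∂μ := by
        refine lintegral_congr_ae ?_
        filter_upwards [(Filter.eventually_all_finset s).2 fun i _ => (hu i).ae_eq_mk]
          with ω hω
        rw [Finset.sup'_congr hs rfl fun i hi => by rw [hω i hi]]
    _ ≤ C * (∑ i ∈ s, a i ^ p) ^ (r / p) :=
        lintegral_sup'_mul_rpow_le_of_measurable hr hrp (fun i => (hu i).measurable_mk)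
          hdom_mk s hs a

theorem eLpNorm_sup'_mul_enorm_le {X : Type*} [NormedAddCommGroup X] (hr : 0 < r) (hrp : r < p)
    {x : I → Ω → X} (hx : ∀ i, AEStronglyMeasurable (x i) μ)
    (hdom : ∀ E, MeasurableSet E → ∀ i,
      eLpNorm (E.indicator (x i)) (.ofReal r) μ ≤ C * ρ E ^ (1 / r - 1 / p))
    (s : Finset I) (hs : s.Nonempty) (a : I → ℝ≥0∞) :
    eLpNorm (fun ω => s.sup' hs fun i => a i * ‖x i ω‖ₑ) (.ofReal r) μ ≤
      C * (∑ i ∈ s, a i ^ p) ^ (1 / p) := by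
  have hr' : ENNReal.ofReal r ≠ 0 := ENNReal.ofReal_ne_zero_iff.2 hr
  have hdom_r : ∀ E, MeasurableSet E → ∀ i,
      ∫⁻ ω in E, ‖x i ω‖ₑ ^ r ∂μ ≤ C ^ r * ρ E ^ (1 - r / p) := fun E hE i => by
    have h := ENNReal.rpow_le_rpow (hdom E hE i) hr.le
    rwa [eLpNorm_indicator_eq_eLpNorm_restrict hE, eLpNorm_eq_lintegral_rpow_enorm_toReal hr'
      ENNReal.ofReal_ne_top, ENNReal.toReal_ofReal hr.le, ← ENNReal.rpow_mul,
      one_div_mul_cancel hr.ne', ENNReal.rpow_one, ENNReal.mul_rpow_of_nonneg _ _ hr.le,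
      ← ENNReal.rpow_mul, show (1 / r - 1 / p) * r = 1 - r / p by field_simp] at h
  rw [eLpNorm_eq_lintegral_rpow_enorm_toReal hr' ENNReal.ofReal_ne_top,
    ENNReal.toReal_ofReal hr.le]
  calc _ ≤ (C ^ r * (∑ i ∈ s, a i ^ p) ^ (r / p)) ^ (1 / r) := by
        gcongr
        exact lintegral_sup'_mul_rpow_le hr hrp (fun i => (hx i).enorm) hdom_r s hs a
    _ = C * (∑ i ∈ s, a i ^ p) ^ (1 / p) := by
        rw [ENNReal.mul_rpow_of_nonneg _ _ (by positivity), ← ENNReal.rpow_mul,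
          ← ENNReal.rpow_mul, mul_one_div_cancel hr.ne', ENNReal.rpow_one,
          show r / p * (1 / r) = 1 / p by field_simp]

end SupBound

/-- One implication of the vector-valued Pisier factorization theorem:
if `‖1_E x_i‖_{L_r} ≤ C₁ (∫_E f dμ)^{1/r-1/p}` for a density `f` and all
measurable `E`, then there is a universal constant `c` with
`‖sup_i |α_i| ‖x_i(·)‖‖_{L_r} ≤ c C₁ (∑ |α_i|^p)^{1/p}` for all finite scalar
sequences `(α_i)`. -/
theorem pisier_factorization_implication :
    ∃ c : ℝ, 0 < c ∧
      ∀ (Ω : Type) (_ : MeasurableSpace Ω) (μ : Measure Ω)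
        (X : Type) (_ : NormedAddCommGroup X)
        (r p : ℝ) (hr : 0 < r) (hrp : r < p)
        (I : Type) (x : I → Ω → X)
        (hx : ∀ i, MemLp (x i) (ENNReal.ofReal r) μ)
        (C₁ : ℝ) (hC₁ : 0 ≤ C₁)
        (f : Ω → ℝ) (hf0 : 0 ≤ f) (hfint : Integrable f μ)
        (hfden : ∫ t, f t ∂μ = 1)
        (hdom : ∀ E : Set Ω, MeasurableSet E → ∀ i,
          eLpNorm (E.indicator (x i)) (ENNReal.ofReal r) μ ≤
            ENNReal.ofReal (C₁ * (∫ t in E, f t ∂μ) ^ (1 / r - 1 / p)))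
        (s : Finset I) (hs : s.Nonempty) (α : I → ℝ),
        eLpNorm (fun ω => s.sup' hs fun i => |α i| * ‖x i ω‖)
            (ENNReal.ofReal r) μ ≤
          ENNReal.ofReal (c * C₁ * (∑ i ∈ s, |α i| ^ p) ^ (1 / p)) := by
  refine ⟨1, one_pos, ?_⟩
  intro Ω _ μ X _ r p hr hrp I x hx C₁ hC₁ f hf0 hfint hfden hdom s hs α
  set ρ := μ.withDensity fun ω => ENNReal.ofReal (f ω)
  have hρ : ∀ E, MeasurableSet E → ρ E = ENNReal.ofReal (∫ t in E, f t ∂μ) :=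
    fun E => withDensity_ofReal_apply hfint (.of_forall hf0)
  have : IsProbabilityMeasure ρ :=
    ⟨by rw [hρ _ .univ, setIntegral_univ, hfden, ENNReal.ofReal_one]⟩
  have hdom_ρ : ∀ E, MeasurableSet E → ∀ i, eLpNorm (E.indicator (x i)) (.ofReal r) μ ≤
      .ofReal C₁ * ρ E ^ (1 / r - 1 / p) := fun E hE i => by
    rw [hρ E hE, ENNReal.ofReal_rpow_of_nonneg (setIntegral_nonneg hE fun t _ => hf0 t)
      (sub_nonneg.2 (one_div_le_one_div_of_le hr hrp.le)), ← ENNReal.ofReal_mul hC₁]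
    exact hdom E hE i
  calc eLpNorm (fun ω => s.sup' hs fun i => |α i| * ‖x i ω‖) (.ofReal r) μ
      = eLpNorm (fun ω => s.sup' hs fun i => ‖α i‖ₑ * ‖x i ω‖ₑ) (.ofReal r) μ := by
        refine eLpNorm_congr_enorm_ae (.of_forall fun ω => ?_)
        rw [Finset.enorm_sup'_of_nonneg hs fun i _ => by positivity, enorm_eq_self]
        simp only [enorm_mul, Real.enorm_abs, enorm_norm]
    _ ≤ .ofReal C₁ * (∑ i ∈ s, ‖α i‖ₑ ^ p) ^ (1 / p) :=
        eLpNorm_sup'_mul_enorm_le hr hrp (fun i => (hx i).1) hdom_ρ s hs _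
    _ = ENNReal.ofReal (1 * C₁ * (∑ i ∈ s, |α i| ^ p) ^ (1 / p)) := by
        rw [← ENNReal.ofReal_sum_abs_rpow s α (hr.trans hrp).le, one_mul,
          ENNReal.ofReal_mul hC₁,
          ENNReal.ofReal_rpow_of_nonneg (by positivity) (one_div_pos.2 (hr.trans hrp)).le]
end
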